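/- arXiv:2212.10034 — 2 statements merged into one kernel-verified Lean document; each statement's English description precedes it below -/
import Mathlib

section
/- Let v : ℝ → ℝ be a continuous, positive, sub-multiplicative function (v(x+y) ≤ v(x)v(y) for all x, y) with inf_ℝ v > 0, and suppose x ↦ e^{-|x|} v(x) is in L¹(ℝ). Then x ↦ e^{-|x|} v(x) is in L^p(ℝ) for every 2 ≤ p ≤ ∞. -/
open MeasureTheory ENNReal

/-!
Write `h x = exp (-|x|) * v x`. Sub-multiplicativity of `v` and the triangle inequality give
`h x ≤ (exp |t| * v t) * h (x - t)`, and the factor `exp |t| * v t` is bounded by some `K` for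
`t ∈ [0, 1]`. Averaging over `t ∈ [0, 1]` yields `h x ≤ K * ∫ h`, so `h` is bounded; a bounded
integrable function lies in every `Lᵖ` with `1 ≤ p ≤ ∞`, since `|h|ᵖ ≤ ‖h‖∞ᵖ⁻¹ |h|`.
-/

theorem MeasureTheory.Integrable.memLp_of_bound {α E : Type*} [MeasurableSpace α]
    {μ : Measure α} [NormedAddCommGroup E] {f : α → E} (hf : Integrable f μ) (C : ℝ)
    (hC : ∀ᵐ x ∂μ, ‖f x‖ ≤ C) {p : ℝ≥0∞} (hp : 1 ≤ p) : MemLp f p μ := by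
  rcases eq_or_ne p ⊤ with rfl | hp_top
  · exact memLp_top_of_bound hf.aestronglyMeasurable C hC
  have hp0 : p ≠ 0 := (zero_lt_one.trans_le hp).ne'
  have hr : 1 ≤ p.toReal := by simpa using ENNReal.toReal_mono hp_top hp
  refine (memLp_norm_rpow_iff hf.aestronglyMeasurable hp0 hp_top).1 ?_
  rw [ENNReal.div_self hp0 hp_top, memLp_one_iff_integrable]
  refine (hf.norm.const_mul (C ^ (p.toReal - 1))).mono' ?_ ?_
  · exact (hf.aestronglyMeasurable.norm.aemeasurable.pow_const _).aestronglyMeasurable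
  · filter_upwards [hC] with x hx
    calc ‖‖f x‖ ^ p.toReal‖ = ‖f x‖ ^ (p.toReal - 1 + 1) := by
          rw [Real.norm_of_nonneg (by positivity), sub_add_cancel]
      _ = ‖f x‖ ^ (p.toReal - 1) * ‖f x‖ := Real.rpow_add_one' (norm_nonneg _) (by linarith)
      _ ≤ C ^ (p.toReal - 1) * ‖f x‖ := by gcongr

theorem le_mul_intervalIntegral_of_le_mul_comp_sub {f : ℝ → ℝ} (hf : Integrable f) {x K : ℝ}
    (hK : ∀ t ∈ Set.Icc (0 : ℝ) 1, f x ≤ K * f (x - t)) :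
    f x ≤ K * ∫ t in x - 1..x, f t := by
  calc f x = ∫ _ in (0 : ℝ)..1, f x := by simp
    _ ≤ ∫ t in (0 : ℝ)..1, K * f (x - t) :=
        intervalIntegral.integral_mono_on zero_le_one intervalIntegrable_const
          ((hf.comp_sub_left x).intervalIntegrable.const_mul K) hK
    _ = K * ∫ t in x - 1..x, f t := by
        rw [intervalIntegral.integral_const_mul, intervalIntegral.integral_comp_sub_left,
          sub_zero]

theorem exp_neg_abs_mul_le_of_submultiplicative {v : ℝ → ℝ} (hv : ∀ x, 0 ≤ v x)
    (hsub : ∀ x y, v (x + y) ≤ v x * v y) (x t : ℝ) :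
    Real.exp (-|x|) * v x ≤ Real.exp |t| * v t * (Real.exp (-|x - t|) * v (x - t)) := by
  have hv_le : v x ≤ v (x - t) * v t := by simpa using hsub (x - t) t
  have hexp_le : Real.exp (-|x|) ≤ Real.exp |t| * Real.exp (-|x - t|) := by
    rw [← Real.exp_add, Real.exp_le_exp]
    linarith [abs_sub x t]
  calc Real.exp (-|x|) * v x ≤ Real.exp |t| * Real.exp (-|x - t|) * (v (x - t) * v t) := by
        gcongr
        · exact hv x
    _ = _ := by ring

theorem exists_bound_exp_neg_abs_mul_of_submultiplicative {v : ℝ → ℝ} (hc : Continuous v)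
    (hv : ∀ x, 0 ≤ v x) (hsub : ∀ x y, v (x + y) ≤ v x * v y)
    (hL1 : Integrable (fun x => Real.exp (-|x|) * v x)) :
    ∃ M, ∀ x, Real.exp (-|x|) * v x ≤ M := by
  set h : ℝ → ℝ := fun x => Real.exp (-|x|) * v x
  have hh : ∀ x, 0 ≤ h x := fun x => mul_nonneg (Real.exp_nonneg _) (hv x)
  obtain ⟨t₀, -, ht₀⟩ := isCompact_Icc.exists_isMaxOn (Set.nonempty_Icc.2 zero_le_one)
    ((Real.continuous_exp.comp continuous_abs).mul hc).continuousOn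
  refine ⟨Real.exp |t₀| * v t₀ * ∫ x, h x, fun x => ?_⟩
  have hshift : ∀ t ∈ Set.Icc (0 : ℝ) 1, h x ≤ Real.exp |t₀| * v t₀ * h (x - t) :=
    fun t ht => (exp_neg_abs_mul_le_of_submultiplicative hv hsub x t).trans
      (mul_le_mul_of_nonneg_right (ht₀ ht) (hh _))
  calc h x ≤ Real.exp |t₀| * v t₀ * ∫ t in x - 1..x, h t :=
        le_mul_intervalIntegral_of_le_mul_comp_sub hL1 hshift
    _ ≤ Real.exp |t₀| * v t₀ * ∫ t, h t := by
        gcongr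
        · exact mul_nonneg (Real.exp_nonneg _) (hv t₀)
        rw [intervalIntegral.integral_of_le (by linarith)]
        exact setIntegral_le_integral hL1 (.of_forall hh)

theorem stmt5_general (v : ℝ → ℝ) (hc : Continuous v) (hpos : ∀ x, 0 < v x)
    (hsub : ∀ x y, v (x + y) ≤ v x * v y)
    (hL1 : Integrable (fun x => Real.exp (-|x|) * v x) volume) :
    ∀ p : ℝ≥0∞, 2 ≤ p →
      eLpNorm (fun x => Real.exp (-|x|) * v x) p volume < ⊤ := by
  intro p hp
  have hv : ∀ x, 0 ≤ v x := fun x => (hpos x).le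
  obtain ⟨M, hM⟩ := exists_bound_exp_neg_abs_mul_of_submultiplicative hc hv hsub hL1
  refine (hL1.memLp_of_bound M (.of_forall fun x => ?_) (one_le_two.trans hp)).eLpNorm_lt_top
  rw [Real.norm_of_nonneg (mul_nonneg (Real.exp_nonneg _) (hv x))]
  exact hM x

theorem stmt5 (v : ℝ → ℝ) (hc : Continuous v) (hpos : ∀ x, 0 < v x)
    (hsub : ∀ x y, v (x + y) ≤ v x * v y)
    (hinf : ∃ m : ℝ, 0 < m ∧ ∀ x, m ≤ v x)
    (hL1 : Integrable (fun x => Real.exp (-|x|) * v x) volume) :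
    ∀ p : ℝ≥0∞, 2 ≤ p →
      eLpNorm (fun x => Real.exp (-|x|) * v x) p volume < ⊤ :=
  stmt5_general v hc hpos hsub hL1
end

section
/- Let h : ℝ → ℝ be nonnegative and integrable with ∫_ℝ e^{|y|} h(y) dy < ∞, and set F(x) := ((∂ₓ p) ∗ h)(x) where p(x) = e^{-|x|}/2. Then for x → +∞, e^{x} F(x) → −λ₊ where λ₊ := (1/2)∫_ℝ e^{y} h(y) dy; that is, F(x) = −e^{-x}(λ₊ + ε₊(x)) with ε₊(x) := (1/2)∫_x^∞ (e^{y} + e^{2x−y}) h(y) dy → 0 as x → ∞. -/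
/-!
For `y ≠ x` the kernel splits as
`sign (x - y) e^{-|x - y|} = e^{-x} (e^y - 𝟙_{y > x} (e^y + e^{2x - y}))`,
so `e^x F x = -λ₊ + ε₊ x` exactly. On `y > x` both `e^y` and `e^{2x - y}` are at most `e^{|y|}`,
so `|ε₊ x|` is bounded by the tail `∫_{y > x} e^{|y|} |h y|` of an integrable function.
-/

open MeasureTheory Filter Set Topology

theorem MeasureTheory.Integrable.mul_of_abs_le_mul {α : Type*} [MeasurableSpace α] {μ : Measure α}
    {w g h : α → ℝ} {C : ℝ} (hwh : Integrable (fun y => w y * h y) μ)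
    (hw : AEStronglyMeasurable w μ) (hw_pos : ∀ᵐ y ∂μ, 0 < w y)
    (hg : AEStronglyMeasurable g μ) (hgw : ∀ᵐ y ∂μ, |g y| ≤ C * w y) :
    Integrable (fun y => g y * h y) μ := by
  have hbdd : ∀ᵐ y ∂μ, ‖g y / w y‖ ≤ C := by
    filter_upwards [hw_pos, hgw] with y hy hgy
    rwa [Real.norm_eq_abs, abs_div, abs_of_pos hy, div_le_iff₀ hy]
  refine (hwh.bdd_mul (hg.aemeasurable.div hw.aemeasurable).aestronglyMeasurable hbdd).congr ?_
  filter_upwards [hw_pos] with y hy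
  simp only [Pi.div_apply]
  field_simp

theorem MeasureTheory.Integrable.mul_of_abs_le_exp_abs {μ : Measure ℝ} {g h : ℝ → ℝ} {C : ℝ}
    (hexp : Integrable (fun y => Real.exp |y| * h y) μ) (hg : AEStronglyMeasurable g μ)
    (hgC : ∀ᵐ y ∂μ, |g y| ≤ C * Real.exp |y|) :
    Integrable (fun y => g y * h y) μ :=
  hexp.mul_of_abs_le_mul (by fun_prop) (ae_of_all _ fun _ => Real.exp_pos _) hg hgC

lemma Real.exp_add_exp_two_mul_sub_le {x y : ℝ} (hxy : x < y) :
    Real.exp y + Real.exp (2 * x - y) ≤ 2 * Real.exp |y| := by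
  have h₁ : Real.exp y ≤ Real.exp |y| := Real.exp_le_exp.2 (le_abs_self y)
  have h₂ : Real.exp (2 * x - y) ≤ Real.exp |y| :=
    Real.exp_le_exp.2 (by linarith [le_abs_self y])
  linarith

section

variable {h : ℝ → ℝ}

lemma integrableOn_Ioi_exp_add_exp_two_mul_sub_mul
    (hexp : Integrable (fun y => Real.exp |y| * h y)) (x : ℝ) :
    IntegrableOn (fun y => (Real.exp y + Real.exp (2 * x - y)) * h y) (Ioi x) := by
  refine hexp.integrableOn.mul_of_abs_le_exp_abs (C := 2) (by fun_prop) ?_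
  filter_upwards [ae_restrict_mem measurableSet_Ioi] with y hy
  rw [abs_of_pos (by positivity)]
  exact Real.exp_add_exp_two_mul_sub_le hy

lemma tendsto_setIntegral_Ioi_exp_add_exp_two_mul_sub_mul
    (hexp : Integrable (fun y => Real.exp |y| * h y)) :
    Tendsto (fun x => ∫ y in Ioi x, (Real.exp y + Real.exp (2 * x - y)) * h y) atTop (𝓝 0) := by
  have htail : Tendsto (fun x => 2 * ∫ y in Ioi x, ‖Real.exp |y| * h y‖) atTop (𝓝 0) := by
    simpa using (tendsto_integral_Ioi_zero (f := fun y => ‖Real.exp |y| * h y‖)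
      tendsto_id).const_mul 2
  refine squeeze_zero_norm (fun x => ?_) htail
  rw [← integral_const_mul]
  refine norm_integral_le_of_norm_le (hexp.norm.integrableOn.const_mul 2) ?_
  filter_upwards [ae_restrict_mem measurableSet_Ioi] with y hy
  rw [norm_mul, norm_mul, Real.norm_of_nonneg (by positivity), Real.norm_eq_abs (Real.exp _),
    Real.abs_exp, ← mul_assoc]
  exact mul_le_mul_of_nonneg_right (Real.exp_add_exp_two_mul_sub_le hy) (norm_nonneg _)

lemma sign_mul_exp_neg_abs_sub_mul {x y : ℝ} (hyx : y ≠ x) :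
    Real.sign (x - y) * Real.exp (-|x - y|) * h y =
      Real.exp (-x) * (Real.exp y * h y -
        (Ioi x).indicator (fun y => (Real.exp y + Real.exp (2 * x - y)) * h y) y) := by
  rcases hyx.lt_or_gt with hlt | hgt
  · have hpos : 0 < x - y := sub_pos.2 hlt
    rw [Real.sign_of_pos hpos, abs_of_pos hpos, indicator_of_notMem (notMem_Ioi.2 hlt.le),
      show -(x - y) = -x + y by ring, Real.exp_add]
    ring
  · have hneg : x - y < 0 := sub_neg.2 hgt
    rw [Real.sign_of_neg hneg, abs_of_neg hneg, indicator_of_mem (mem_Ioi.2 hgt),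
      show -(-(x - y)) = -x + (2 * x - y) by ring, Real.exp_add]
    ring

lemma integral_sign_mul_exp_neg_abs_sub_mul
    (hexp : Integrable (fun y => Real.exp |y| * h y)) (x : ℝ) :
    ∫ y, Real.sign (x - y) * Real.exp (-|x - y|) * h y =
      Real.exp (-x) * ((∫ y, Real.exp y * h y) -
        ∫ y in Ioi x, (Real.exp y + Real.exp (2 * x - y)) * h y) := by
  have hexp_mul : Integrable (fun y => Real.exp y * h y) :=
    hexp.mul_of_abs_le_exp_abs (C := 1) (by fun_prop) (ae_of_all _ fun y => by
      rw [one_mul, Real.abs_exp]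
      exact Real.exp_le_exp.2 (le_abs_self y))
  rw [integral_congr_ae ((volume.ae_ne x).mono fun y => sign_mul_exp_neg_abs_sub_mul),
    integral_const_mul, integral_sub hexp_mul
      ((integrableOn_Ioi_exp_add_exp_two_mul_sub_mul hexp x).integrable_indicator
        measurableSet_Ioi),
    integral_indicator measurableSet_Ioi]

end

theorem stmt17_general (h : ℝ → ℝ)
    (hexp : Integrable (fun y => Real.exp |y| * h y) volume)
    (F : ℝ → ℝ)
    (hF : F = fun x => -(1 / 2) * ∫ y, Real.sign (x - y) * Real.exp (-|x - y|) * h y)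
    (lam : ℝ) (hlam : lam = (1 / 2) * ∫ y, Real.exp y * h y)
    (ε : ℝ → ℝ)
    (hε : ε = fun x => (1 / 2) * ∫ y in Set.Ioi x, (Real.exp y + Real.exp (2 * x - y)) * h y) :
    Tendsto (fun x => Real.exp x * F x) atTop (nhds (-lam)) ∧
      Tendsto ε atTop (nhds 0) := by
  have hε_tendsto : Tendsto ε atTop (𝓝 0) := by
    rw [hε, ← mul_zero (1 / 2 : ℝ)]
    exact (tendsto_setIntegral_Ioi_exp_add_exp_two_mul_sub_mul hexp).const_mul _
  have hexp_mul_F : ∀ x, Real.exp x * F x = -lam + ε x := by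
    intro x
    rw [hF, hlam, hε]
    dsimp only
    rw [integral_sign_mul_exp_neg_abs_sub_mul hexp x, Real.exp_neg]
    field_simp
    ring
  refine ⟨?_, hε_tendsto⟩
  simpa [hexp_mul_F] using (tendsto_const_nhds (x := -lam)).add hε_tendsto

theorem stmt17 (h : ℝ → ℝ) (hpos : ∀ y, 0 ≤ h y) (hint : Integrable h volume)
    (hexp : Integrable (fun y => Real.exp |y| * h y) volume)
    (F : ℝ → ℝ)
    (hF : F = fun x => -(1 / 2) * ∫ y, Real.sign (x - y) * Real.exp (-|x - y|) * h y)
    (lam : ℝ) (hlam : lam = (1 / 2) * ∫ y, Real.exp y * h y)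
    (ε : ℝ → ℝ)
    (hε : ε = fun x => (1 / 2) * ∫ y in Set.Ioi x, (Real.exp y + Real.exp (2 * x - y)) * h y) :
    Tendsto (fun x => Real.exp x * F x) atTop (nhds (-lam)) ∧
      Tendsto ε atTop (nhds 0) :=
  stmt17_general h hexp F hF lam hlam ε hε
end
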